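/- Fix integers k ≥ 1 and m ≥ 1. The map sending a multiset S of size m−1 with elements in {1, …, k} to the partition ⋃_{i ∈ S} R_i (the union over the multiset, with multiplicity, of the rectangles R_i) is injective: two distinct multisets of size m−1 yield distinct partitions. -/

import Mathlib

open scoped RealInnerProductSpace

/-- The hook length of the cell `c` (0-indexed) in the Young diagram `μ`:
arm + leg + 1 = rowLen c.1 + colLen c.2 - c.1 - c.2 - 1. -/
def YoungDiagram.hook (μ : YoungDiagram) (c : ℕ × ℕ) : ℕ :=
  μ.rowLen c.1 + μ.colLen c.2 - c.1 - c.2 - 1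

/-- A partition is a `t`-core if no cell has hook length `t`. -/
def YoungDiagram.IsCore (μ : YoungDiagram) (t : ℕ) : Prop :=
  ∀ c ∈ μ.cells, μ.hook c ≠ t

/-- `c` is an addable cell of `μ`: it is not in `μ` and inserting it yields a Young diagram. -/
def YoungDiagram.IsAddable (μ : YoungDiagram) (c : ℕ × ℕ) : Prop :=
  c ∉ μ ∧ ∃ ν : YoungDiagram, ν.cells = insert c μ.cells

/-- `c` is a removable cell of `μ`: it is in `μ` and erasing it yields a Young diagram. -/
def YoungDiagram.IsRemovable (μ : YoungDiagram) (c : ℕ × ℕ) : Prop :=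
  c ∈ μ ∧ ∃ ν : YoungDiagram, ν.cells = μ.cells.erase c

/-- The residue mod `k+1` of a cell: its content `c.2 - c.1` taken in `ZMod (k+1)`. -/
def residue (k : ℕ) (c : ℕ × ℕ) : ZMod (k + 1) :=
  (((c.2 : ℤ) - (c.1 : ℤ) : ℤ) : ZMod (k + 1))

/-- The rectangular Young diagram with `r` rows and `c` columns. -/
def rectangle (r c : ℕ) : YoungDiagram where
  cells := Finset.range r ×ˢ Finset.range c
  isLowerSet := by
    rintro ⟨a, b⟩ ⟨x, y⟩ ⟨h1, h2⟩ h
    simp only [Finset.coe_product, Set.mem_prod, Finset.mem_coe, Finset.mem_range] at *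
    exact ⟨lt_of_le_of_lt h1 h.1, lt_of_le_of_lt h2 h.2⟩

/-- The rectangle `R_i = (i^{k-i+1})`, whose largest hook length is `k`. -/
def kRectangle (k i : ℕ) : YoungDiagram := rectangle (k - i + 1) i

/-- The multiset of (nonzero) parts of a Young diagram. -/
def partsOf (μ : YoungDiagram) : Multiset ℕ := (μ.rowLens : Multiset ℕ)

/-- The Young diagram whose parts are the given multiset, sorted into non-increasing order. -/
def diagramOfParts (s : Multiset ℕ) : YoungDiagram :=
  YoungDiagram.ofRowLens (s.sort (· ≥ ·)) (s.pairwise_sort _).sortedGE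

/-- `R_{i_1} ∪ ⋯ ∪ R_{i_{m-1}}`: the partition obtained by combining the parts of
the rectangles `R_i` for `i` ranging over the multiset `S` (with multiplicity). -/
def unionRects (k : ℕ) (S : Multiset ℕ) : YoungDiagram :=
  diagramOfParts ((S.map fun i => partsOf (kRectangle k i)).sum)

/-- The Lapointe–Morse map: the `i`-th entry of `pMap k μ` is the number of cells in
row `i` of `μ` whose hook length is at most `k`. -/
def pMap (k : ℕ) (μ : YoungDiagram) (i : ℕ) : ℕ :=
  ((Finset.range (μ.rowLen i)).filter fun j => μ.hook (i, j) ≤ k).card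

/-- The simple roots of type `A_k` in the standard realization. -/
noncomputable def simpleRoot (k : ℕ) (i : Fin k) : EuclideanSpace ℝ (Fin (k + 1)) :=
  EuclideanSpace.single i.castSucc 1 - EuclideanSpace.single i.succ 1

/-- The highest root `φ = α_1 + ⋯ + α_k` of type `A_k`. -/
noncomputable def highestRoot (k : ℕ) : EuclideanSpace ℝ (Fin (k + 1)) :=
  ∑ i, simpleRoot k i

/-!
The rectangle `R_i` consists of `k - i + 1 ≥ 1` rows of length `i`, so the part `i` occurs in
`⋃_{j ∈ S} R_j` exactly `(k - i + 1) * (multiplicity of i in S)` times, and `S` can be read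
off from the parts of the union.
-/

lemma mem_rectangle {r c : ℕ} {p : ℕ × ℕ} : p ∈ rectangle r c ↔ p.1 < r ∧ p.2 < c := by
  simp [← YoungDiagram.mem_cells, rectangle]

lemma rectangle_rowLen {r c i : ℕ} (hi : i < r) : (rectangle r c).rowLen i = c :=
  eq_of_forall_lt_iff fun j => by rw [← YoungDiagram.mem_iff_lt_rowLen, mem_rectangle]; simp [hi]

lemma rectangle_colLen {r c j : ℕ} (hj : j < c) : (rectangle r c).colLen j = r :=
  eq_of_forall_lt_iff fun i => by rw [← YoungDiagram.mem_iff_lt_colLen, mem_rectangle]; simp [hj]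

lemma partsOf_rectangle {r c : ℕ} (hc : 0 < c) : partsOf (rectangle r c) = .replicate r c := by
  rw [partsOf, YoungDiagram.rowLens, rectangle_colLen hc, ← Multiset.coe_replicate,
    List.map_congr_left fun i hi => rectangle_rowLen (List.mem_range.mp hi), List.map_const',
    List.length_range]

lemma partsOf_diagramOfParts {s : Multiset ℕ} (hpos : ∀ x ∈ s, 0 < x) :
    partsOf (diagramOfParts s) = s := by
  rw [partsOf, diagramOfParts, YoungDiagram.rowLens_ofRowLens_eq_self, Multiset.sort_eq]
  simpa only [Multiset.mem_sort] using hpos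

section ReplicateSum

variable {α : Type*} (n : α → ℕ) (S : Multiset α)

lemma mem_of_mem_sum_map_replicate {a : α}
    (ha : a ∈ (S.map fun j => Multiset.replicate (n j) j).sum) : a ∈ S := by
  obtain ⟨t, ht, hat⟩ := Multiset.mem_join.mp ha
  obtain ⟨j, hj, rfl⟩ := Multiset.mem_map.mp ht
  rwa [Multiset.eq_of_mem_replicate hat]

lemma count_sum_map_replicate [DecidableEq α] (a : α) :
    (S.map fun j => Multiset.replicate (n j) j).sum.count a = n a * S.count a := by
  induction S using Multiset.induction with
  | empty => simp
  | cons b S ih =>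
    rw [Multiset.map_cons, Multiset.sum_cons, Multiset.count_add, ih, Multiset.count_replicate,
      Multiset.count_cons]
    obtain rfl | hba := eq_or_ne b a
    · simp [mul_add, add_comm]
    · simp [hba, hba.symm]

end ReplicateSum

lemma partsOf_unionRects {k : ℕ} {S : Multiset ℕ} (hS : ∀ i ∈ S, 1 ≤ i) :
    partsOf (unionRects k S) = (S.map fun i => Multiset.replicate (k - i + 1) i).sum := by
  have hrects : S.map (fun i => partsOf (kRectangle k i)) =
      S.map fun i => Multiset.replicate (k - i + 1) i :=
    Multiset.map_congr rfl fun i hi => partsOf_rectangle (hS i hi)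
  rw [unionRects, hrects, partsOf_diagramOfParts]
  exact fun x hx => hS x (mem_of_mem_sum_map_replicate _ _ hx)

theorem unionRects_injective_general (k : ℕ)
    (S T : Multiset ℕ)
    (hS : ∀ i ∈ S, 1 ≤ i ∧ i ≤ k) (hT : ∀ i ∈ T, 1 ≤ i ∧ i ≤ k)
    (h : unionRects k S = unionRects k T) : S = T := by
  have hparts := congrArg partsOf h
  rw [partsOf_unionRects fun i hi => (hS i hi).1,
    partsOf_unionRects fun i hi => (hT i hi).1] at hparts
  ext i
  have hcount := congrArg (Multiset.count i) hparts
  rw [count_sum_map_replicate, count_sum_map_replicate] at hcount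
  exact Nat.eq_of_mul_eq_mul_left (Nat.succ_pos _) hcount

/-- For `k ≥ 1` and `m ≥ 1`, the map sending a multiset `S` of size
`m-1` with elements in `{1, …, k}` to the partition `⋃_{i ∈ S} R_i` is injective. -/
theorem unionRects_injective (k m : ℕ) (hk : 1 ≤ k) (hm : 1 ≤ m)
    (S T : Multiset ℕ)
    (hScard : Multiset.card S = m - 1) (hTcard : Multiset.card T = m - 1)
    (hS : ∀ i ∈ S, 1 ≤ i ∧ i ≤ k) (hT : ∀ i ∈ T, 1 ≤ i ∧ i ≤ k)
    (h : unionRects k S = unionRects k T) : S = T :=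
  unionRects_injective_general k S T hS hT h
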